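/- arXiv:2407.06017 — 2 statements merged into one kernel-verified Lean document; each statement's English description precedes it below -/
import Mathlib

section
/- Let A ⊆ B ⊆ ℝ^N with A closed, the interior of A nonempty, and B convex. Then A = B if and only if the topological boundary of A is contained in the topological boundary of B. -/
/-- A preconnected set meeting both `t` and its complement meets the frontier of `t`. -/
lemma aux_connected_meets_frontier {X : Type*} [TopologicalSpace X] {s t : Set X}
    (hs : IsPreconnected s) (h1 : (s ∩ t).Nonempty) (h2 : (s \ t).Nonempty) :
    (s ∩ frontier t).Nonempty := by
  haveI : PreconnectedSpace s := isPreconnected_iff_preconnectedSpace.mp hs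
  have hne : (Subtype.val ⁻¹' t : Set s).Nonempty := by
    obtain ⟨x, hxs, hxt⟩ := h1
    exact ⟨⟨x, hxs⟩, hxt⟩
  have hnu : (Subtype.val ⁻¹' t : Set s) ≠ Set.univ := by
    obtain ⟨x, hxs, hxt⟩ := h2
    intro h
    exact hxt (by have := h ▸ Set.mem_univ (⟨x, hxs⟩ : s); exact this)
  obtain ⟨z, hz⟩ := nonempty_frontier_iff.mpr ⟨hne, hnu⟩
  exact ⟨z.1, z.2, continuous_subtype_val.frontier_preimage_subset t hz⟩

/-- Lemma 5.2: for `A ⊆ B ⊆ ℝ^N` with `A` closed, `interior A` nonempty and `B` convex,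
`A = B` iff `frontier A ⊆ frontier B`. -/
theorem stmt_0 (N : ℕ) (A B : Set (EuclideanSpace ℝ (Fin N)))
    (hAB : A ⊆ B) (hA : IsClosed A) (hAint : (interior A).Nonempty)
    (hB : Convex ℝ B) :
    A = B ↔ frontier A ⊆ frontier B := by
  constructor
  · rintro rfl; exact subset_rfl
  · intro hfront
    refine Set.Subset.antisymm hAB fun x hxB => ?_
    by_contra hxA
    obtain ⟨a, ha⟩ := hAint
    have haB : a ∈ interior B := interior_mono hAB ha
    have hseg : IsPreconnected (segment ℝ a x) := (convex_segment a x).isPreconnected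
    obtain ⟨z, hzs, hzf⟩ := aux_connected_meets_frontier hseg
      ⟨a, left_mem_segment ℝ a x, interior_subset ha⟩
      ⟨x, right_mem_segment ℝ a x, hxA⟩
    have hzA : z ∈ A := hA.closure_subset (frontier_subset_closure hzf)
    have hzB : z ∈ frontier B := hfront hzf
    have hza : a ≠ z := by
      rintro rfl
      exact hzB.2 haB
    have hzx : x ≠ z := by rintro rfl; exact hxA hzA
    have : z ∈ openSegment ℝ a x := mem_openSegment_of_ne_left_right hza hzx hzs
    exact hzB.2
      (hB.openSegment_interior_self_subset_interior haB hxB this)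
end

section
/- A closed pointed convex cone in a finite-dimensional real vector space is equal to the conic hull of its extreme rays. -/
/-!
Induction on the dimension of `span C`. If it is at least two, the closed sets `C` and `-C`, which
meet only at `0`, cannot cover the connected set `span C \ {0}`, so there is a direction
`v ∈ span C` with `v, -v ∉ C`. The line through `x ∈ C` in direction `v` meets `C` in a compact
segment containing `x`. An endpoint `y` generates the face `{a ∈ C | t • y - a ∈ C for some t}`
of `C`, in whose relative interior `y` lies; as one cannot move from `y` in direction `v` within
`C`, `v` is not in the span of this face. The face is a closed salient cone of smaller dimension,
so by induction `y` is a conic combination of its extreme rays, which are extreme rays of `C`;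
hence so is `x`, which lies between the two endpoints.
-/

/-- Conic combinations of at most `k` elements of `S`. -/
def coneComb {E : Type*} [AddCommGroup E] [Module ℝ E] (k : ℕ) (S : Set E) : Set E :=
  {x | ∃ (c : Fin k → ℝ) (f : Fin k → E),
    (∀ i, 0 ≤ c i) ∧ (∀ i, f i ∈ S) ∧ x = ∑ i, c i • f i}

/-- `F` is a face of the convex cone `C`. -/
def IsFaceOf {E : Type*} [AddCommGroup E] [Module ℝ E] (C F : Set E) : Prop :=
  F ⊆ C ∧ Convex ℝ F ∧ ∀ a ∈ C, ∀ b ∈ C, a + b ∈ F → a ∈ F ∧ b ∈ F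

/-- The union of the extreme rays (one-dimensional faces) of `C`. -/
def extremeRayPoints {E : Type*} [AddCommGroup E] [Module ℝ E] (C : Set E) : Set E :=
  {x | ∃ F : Set E, IsFaceOf C F ∧ Module.finrank ℝ (Submodule.span ℝ F) = 1 ∧ x ∈ F}

open Filter Module Submodule

section ConicCombinations

variable {E : Type*} [AddCommGroup E] [Module ℝ E] {S T : Set E}

theorem convex_of_nonneg_smul_mem_of_add_mem {C : Set E}
    (hsmul : ∀ x ∈ C, ∀ c : ℝ, 0 ≤ c → c • x ∈ C) (hadd : ∀ x ∈ C, ∀ y ∈ C, x + y ∈ C) :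
    Convex ℝ C :=
  fun x hx y hy a b ha hb _ => hadd _ (hsmul x hx a ha) _ (hsmul y hy b hb)

theorem coneComb_mono {k : ℕ} (h : S ⊆ T) : coneComb k S ⊆ coneComb k T := by
  rintro x ⟨c, f, hc, hf, rfl⟩
  exact ⟨c, f, hc, fun i => h (hf i), rfl⟩

theorem iUnion_coneComb_mono (h : S ⊆ T) : ⋃ k, coneComb k S ⊆ ⋃ k, coneComb k T :=
  Set.iUnion_mono fun _ => coneComb_mono h

theorem zero_mem_iUnion_coneComb : (0 : E) ∈ ⋃ k, coneComb k S :=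
  Set.mem_iUnion.2 ⟨0, Fin.elim0, Fin.elim0, Fin.rec0, Fin.rec0, by simp⟩

theorem subset_iUnion_coneComb : S ⊆ ⋃ k, coneComb k S := fun x hx =>
  Set.mem_iUnion.2 ⟨1, fun _ => 1, fun _ => x, fun _ => zero_le_one, fun _ => hx, by simp⟩

theorem smul_mem_iUnion_coneComb {x : E} (hx : x ∈ ⋃ k, coneComb k S) {t : ℝ} (ht : 0 ≤ t) :
    t • x ∈ ⋃ k, coneComb k S := by
  obtain ⟨k, c, f, hc, hf, rfl⟩ := Set.mem_iUnion.1 hx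
  refine Set.mem_iUnion.2 ⟨k, fun i => t * c i, f, fun i => mul_nonneg ht (hc i), hf, ?_⟩
  simp [Finset.smul_sum, mul_smul]

theorem add_mem_iUnion_coneComb {x y : E} (hx : x ∈ ⋃ k, coneComb k S)
    (hy : y ∈ ⋃ k, coneComb k S) : x + y ∈ ⋃ k, coneComb k S := by
  obtain ⟨k, c, f, hc, hf, rfl⟩ := Set.mem_iUnion.1 hx
  obtain ⟨l, d, g, hd, hg, rfl⟩ := Set.mem_iUnion.1 hy
  refine Set.mem_iUnion.2 ⟨k + l, Fin.append c d, Fin.append f g, Fin.addCases ?_ ?_,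
    Fin.addCases ?_ ?_, by simp [Fin.sum_univ_add]⟩ <;> simp [hc, hd, hf, hg]

theorem convex_iUnion_coneComb : Convex ℝ (⋃ k, coneComb k S) :=
  convex_of_nonneg_smul_mem_of_add_mem (fun _ hx _ hc => smul_mem_iUnion_coneComb hx hc)
    fun _ hx _ hy => add_mem_iUnion_coneComb hx hy

theorem iUnion_coneComb_subset {C : Set E} (hsmul : ∀ x ∈ C, ∀ c : ℝ, 0 ≤ c → c • x ∈ C)
    (hadd : ∀ x ∈ C, ∀ y ∈ C, x + y ∈ C) (h0 : (0 : E) ∈ C) (hS : S ⊆ C) :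
    ⋃ k, coneComb k S ⊆ C := by
  rintro _ ⟨-, ⟨k, rfl⟩, c, f, hc, hf, rfl⟩
  exact Finset.sum_induction _ (· ∈ C) (fun a b ha hb => hadd a ha b hb) h0
    fun i _ => hsmul _ (hS (hf i)) _ (hc i)

end ConicCombinations

section Faces

variable {E : Type*} [AddCommGroup E] [Module ℝ E] {C : Set E} {y v : E}

theorem extremeRayPoints_subset (C : Set E) : extremeRayPoints C ⊆ C :=
  fun _ ⟨_, hF, _, hxF⟩ => hF.1 hxF

theorem extremeRayPoints_subset_of_isFaceOf {F : Set E} (h : IsFaceOf C F) :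
    extremeRayPoints F ⊆ extremeRayPoints C := by
  rintro x ⟨G, ⟨hGF, hGconv, hGface⟩, hG1, hxG⟩
  refine ⟨G, ⟨hGF.trans h.1, hGconv, fun a ha b hb hab => ?_⟩, hG1, hxG⟩
  obtain ⟨haF, hbF⟩ := h.2.2 a ha b hb (hGF hab)
  exact hGface a haF b hbF hab

structure IsSalientCone (C : Set E) : Prop where
  smul_mem : ∀ x ∈ C, ∀ c : ℝ, 0 ≤ c → c • x ∈ C
  add_mem : ∀ x ∈ C, ∀ y ∈ C, x + y ∈ C
  inter_neg_eq : C ∩ -C = {0}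

def generatedFace (C : Set E) (y : E) : Set E :=
  {a | a ∈ C ∧ ∃ t : ℝ, t • y - a ∈ C}

namespace IsSalientCone

theorem zero_mem (hC : IsSalientCone C) : (0 : E) ∈ C :=
  (hC.inter_neg_eq.symm.subset rfl : (0 : E) ∈ C ∩ -C).1

theorem convex (hC : IsSalientCone C) : Convex ℝ C :=
  convex_of_nonneg_smul_mem_of_add_mem hC.smul_mem hC.add_mem

theorem isFaceOf_self (hC : IsSalientCone C) : IsFaceOf C C :=
  ⟨subset_rfl, hC.convex, fun _ ha _ hb _ => ⟨ha, hb⟩⟩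

theorem of_subset (hC : IsSalientCone C) {D : Set E} (hD : D ⊆ C)
    (hsmul : ∀ x ∈ D, ∀ c : ℝ, 0 ≤ c → c • x ∈ D)
    (hadd : ∀ x ∈ D, ∀ y ∈ D, x + y ∈ D) (h0 : (0 : E) ∈ D) : IsSalientCone D := by
  refine ⟨hsmul, hadd, subset_antisymm ?_ (by simpa using h0)⟩
  rw [← hC.inter_neg_eq]
  exact Set.inter_subset_inter hD (Set.neg_subset_neg.2 hD)

theorem mem_generatedFace_self (hC : IsSalientCone C) (hy : y ∈ C) : y ∈ generatedFace C y :=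
  ⟨hy, 1, by simpa using hC.zero_mem⟩

protected theorem generatedFace (hC : IsSalientCone C) (y : E) :
    IsSalientCone (generatedFace C y) := by
  refine hC.of_subset (fun _ ha => ha.1) ?_ ?_ ⟨hC.zero_mem, 0, by simpa using hC.zero_mem⟩
  · rintro a ⟨haC, t, ht⟩ c hc
    refine ⟨hC.smul_mem a haC c hc, c * t, ?_⟩
    simpa [mul_smul, smul_sub] using hC.smul_mem _ ht c hc
  · rintro a ⟨haC, s, hs⟩ b ⟨hbC, t, ht⟩
    refine ⟨hC.add_mem a haC b hbC, s + t, ?_⟩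
    convert hC.add_mem _ hs _ ht using 1
    module

theorem isFaceOf_generatedFace (hC : IsSalientCone C) (y : E) :
    IsFaceOf C (generatedFace C y) := by
  refine ⟨fun _ ha => ha.1, (hC.generatedFace y).convex,
    fun a ha b hb ⟨_, t, ht⟩ => ⟨⟨ha, t, ?_⟩, ⟨hb, t, ?_⟩⟩⟩
  · convert hC.add_mem _ ht _ hb using 1
    abel
  · convert hC.add_mem _ ht _ ha using 1
    abel

theorem exists_smul_add_mem_of_mem_span_generatedFace (hC : IsSalientCone C)
    (hv : v ∈ span ℝ (generatedFace C y)) : ∃ s : ℝ, s • y + v ∈ C := by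
  -- quantifying over all multiples of `v` makes the claim stable under `span_induction`
  suffices ∀ c : ℝ, ∃ s : ℝ, s • y + c • v ∈ C by simpa using this 1
  induction hv using Submodule.span_induction with
  | mem a ha =>
    intro c
    rcases le_or_gt 0 c with hc | hc
    · exact ⟨0, by simpa using hC.smul_mem a ha.1 c hc⟩
    · obtain ⟨t, ht⟩ := ha.2
      refine ⟨-c * t, ?_⟩
      convert hC.smul_mem _ ht (-c) (by linarith) using 1
      module
  | zero => exact fun _ => ⟨0, by simpa using hC.zero_mem⟩
  | add a b _ _ ha hb =>
    intro c
    obtain ⟨s, hs⟩ := ha c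
    obtain ⟨t, ht⟩ := hb c
    refine ⟨s + t, ?_⟩
    convert hC.add_mem _ hs _ ht using 1
    module
  | smul d a _ ha => exact fun c => by simpa [smul_smul] using ha (c * d)

theorem generatedFace_eq_inter_span (hC : IsSalientCone C) (y : E) :
    generatedFace C y = C ∩ span ℝ (generatedFace C y) := by
  refine subset_antisymm (fun a ha => ⟨ha.1, subset_span ha⟩) ?_
  rintro a ⟨haC, ha⟩
  obtain ⟨s, hs⟩ := hC.exists_smul_add_mem_of_mem_span_generatedFace (neg_mem ha)
  exact ⟨haC, s, by simpa [sub_eq_add_neg] using hs⟩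

theorem notMem_span_generatedFace (hC : IsSalientCone C) (hy : y ∈ C)
    (hmax : ∀ ε > (0 : ℝ), y + ε • v ∉ C) : v ∉ span ℝ (generatedFace C y) := by
  intro hv
  obtain ⟨s, hs⟩ := hC.exists_smul_add_mem_of_mem_span_generatedFace hv
  set r := max s 0 + 1
  have hr : 0 < r := by positivity
  have hry : r • y + v ∈ C := by
    convert hC.add_mem _ hs _ (hC.smul_mem y hy (r - s) (by linarith [le_max_left s 0])) using 1
    module
  refine hmax r⁻¹ (inv_pos.2 hr) ?_
  convert hC.smul_mem _ hry r⁻¹ (inv_nonneg.2 hr.le) using 1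
  rw [smul_add, smul_smul, inv_mul_cancel₀ hr.ne', one_smul]

end IsSalientCone

end Faces

section Topology

variable {E : Type*} [AddCommGroup E] [Module ℝ E] [TopologicalSpace E]
  [IsTopologicalAddGroup E] [ContinuousSMul ℝ E] {C : Set E}

theorem exists_mem_notMem_and_neg_notMem (hcl : IsClosed C) (hC : C ∩ -C = {0})
    (V : Submodule ℝ E) (hV : 1 < Module.rank ℝ V) : ∃ v ∈ V, v ∉ C ∧ -v ∉ C := by
  by_contra! hcover
  have hconn := isConnected_compl_singleton_of_one_lt_rank hV 0
  set s : Set E := Subtype.val '' ({0}ᶜ : Set V)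
  obtain ⟨w, hw0⟩ := hconn.nonempty
  have hws : (w : E) ∈ s := ⟨w, hw0, rfl⟩
  have hnws : -(w : E) ∈ s := ⟨-w, by simpa using hw0, rfl⟩
  have hsplit := isPreconnected_iff_subset_of_disjoint_closed.1
    (hconn.isPreconnected.image _ continuous_subtype_val.continuousOn) C (-C) hcl hcl.neg
    (fun _ ⟨u, _, hu⟩ => hu ▸ (em (u.1 ∈ C)).imp id (hcover u u.2))
    (by
      rw [hC]
      exact Set.eq_empty_iff_forall_notMem.2 fun _ ⟨⟨u, hu, hu0⟩, h⟩ =>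
        hu (Subtype.ext (hu0.trans h)))
  have hw : (w : E) ∈ C ∩ -C := by
    rcases hsplit with hsC | hsC
    · exact ⟨hsC hws, by simpa using hsC hnws⟩
    · exact ⟨by simpa using hsC hnws, hsC hws⟩
  rw [hC] at hw
  exact hw0 (Subtype.ext hw)

theorem bddAbove_setOf_add_smul_mem (hsmul : ∀ x ∈ C, ∀ c : ℝ, 0 ≤ c → c • x ∈ C)
    (hcl : IsClosed C) (x : E) {v : E} (hv : v ∉ C) : BddAbove {t : ℝ | x + t • v ∈ C} := by
  by_contra h
  rw [not_bddAbove_iff] at h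
  choose t ht hnt using fun n : ℕ => h n
  have htop : Tendsto t atTop atTop :=
    tendsto_atTop_mono (fun n => (hnt n).le) tendsto_natCast_atTop_atTop
  refine hv (hcl.mem_of_tendsto (b := atTop) (f := fun n => (t n)⁻¹ • x + v) ?_ ?_)
  · simpa using ((tendsto_inv_atTop_zero.comp htop).smul_const x).add_const v
  · filter_upwards [htop.eventually_gt_atTop 0] with n hn
    have := hsmul _ (ht n) _ (inv_nonneg.2 hn.le)
    rwa [smul_add, smul_smul, inv_mul_cancel₀ hn.ne', one_smul] at this

theorem exists_maximal_add_smul_mem (hsmul : ∀ x ∈ C, ∀ c : ℝ, 0 ≤ c → c • x ∈ C)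
    (hcl : IsClosed C) {x v : E} (hx : x ∈ C) (hv : v ∉ C) :
    ∃ b : ℝ, 0 ≤ b ∧ x + b • v ∈ C ∧ ∀ ε > (0 : ℝ), (x + b • v) + ε • v ∉ C := by
  set T := {t : ℝ | x + t • v ∈ C}
  have hT0 : (0 : ℝ) ∈ T := by simpa [T] using hx
  have hTbdd := bddAbove_setOf_add_smul_mem hsmul hcl x hv
  have hTcl : IsClosed T := hcl.preimage (by fun_prop)
  refine ⟨sSup T, le_csSup hTbdd hT0, hTcl.csSup_mem ⟨0, hT0⟩ hTbdd, fun ε hε hmem => ?_⟩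
  have : sSup T + ε ∈ T := by simpa [T, add_smul, add_assoc] using hmem
  linarith [le_csSup hTbdd this]

end Topology

section FiniteDimensional

variable {E : Type*} [NormedAddCommGroup E] [NormedSpace ℝ E] [FiniteDimensional ℝ E] {C : Set E}

theorem IsSalientCone.isClosed_generatedFace (hC : IsSalientCone C) (hcl : IsClosed C) (y : E) :
    IsClosed (generatedFace C y) := by
  rw [hC.generatedFace_eq_inter_span y]
  exact hcl.inter (Submodule.closed_of_finiteDimensional _)

theorem IsSalientCone.finrank_span_generatedFace_lt (hC : IsSalientCone C) {y v : E}
    (hy : y ∈ C) (hv : v ∈ span ℝ C) (hmax : ∀ ε > (0 : ℝ), y + ε • v ∉ C) :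
    finrank ℝ (span ℝ (generatedFace C y)) < finrank ℝ (span ℝ C) :=
  Submodule.finrank_lt_finrank_of_lt <| (span_mono fun _ ha => ha.1).lt_of_ne
    fun h => hC.notMem_span_generatedFace hy hmax (h ▸ hv)

theorem IsSalientCone.subset_iUnion_coneComb_extremeRayPoints (hC : IsSalientCone C)
    (hcl : IsClosed C) : C ⊆ ⋃ k, coneComb k (extremeRayPoints C) := by
  induction hn : finrank ℝ (span ℝ C) using Nat.strong_induction_on generalizing C with
  | _ n ih =>
  have mem_of_maximal : ∀ y v, y ∈ C → v ∈ span ℝ C → (∀ ε > (0 : ℝ), y + ε • v ∉ C) →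
      y ∈ ⋃ k, coneComb k (extremeRayPoints C) := fun y v hy hv hmax =>
    iUnion_coneComb_mono (extremeRayPoints_subset_of_isFaceOf (hC.isFaceOf_generatedFace y))
      (ih _ (hn ▸ hC.finrank_span_generatedFace_lt hy hv hmax) (hC.generatedFace y)
        (hC.isClosed_generatedFace hcl y) rfl (hC.mem_generatedFace_self hy))
  intro x hx
  by_cases hx0 : x = 0
  · exact hx0 ▸ zero_mem_iUnion_coneComb
  rcases le_or_gt n 1 with hn1 | hn1
  · have hpos : 0 < finrank ℝ (span ℝ C) :=
      finrank_pos_iff_exists_ne_zero.2 ⟨⟨x, subset_span hx⟩, by simpa using hx0⟩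
    exact subset_iUnion_coneComb ⟨C, hC.isFaceOf_self, by omega, hx⟩
  obtain ⟨v, hvC, hv, hnv⟩ := exists_mem_notMem_and_neg_notMem hcl hC.inter_neg_eq (span ℝ C)
    (by rw [← finrank_eq_rank]; exact_mod_cast hn ▸ hn1)
  obtain ⟨b, hb, hyC, hymax⟩ := exists_maximal_add_smul_mem hC.smul_mem hcl hx hv
  obtain ⟨b', hb', hzC, hzmax⟩ := exists_maximal_add_smul_mem hC.smul_mem hcl hx hnv
  have hseg : x ∈ segment ℝ (x + b' • -v) (x + b • v) := by
    rw [mem_segment_iff_sameRay]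
    simpa using (SameRay.rfl.nonneg_smul_left hb').nonneg_smul_right hb
  exact convex_iUnion_coneComb.segment_subset (mem_of_maximal _ _ hzC (neg_mem hvC) hzmax)
    (mem_of_maximal _ _ hyC hvC hymax) hseg

end FiniteDimensional

/-- A closed pointed convex cone in a finite-dimensional real vector space is the conic hull
of its extreme rays. -/
theorem stmt_3 {E : Type*} [NormedAddCommGroup E] [NormedSpace ℝ E] [FiniteDimensional ℝ E]
    (C : Set E)
    (hsmul : ∀ x ∈ C, ∀ c : ℝ, 0 ≤ c → c • x ∈ C)
    (hadd : ∀ x ∈ C, ∀ y ∈ C, x + y ∈ C)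
    (hclosed : IsClosed C) (hpointed : C ∩ (-C) = {0}) :
    C = ⋃ k : ℕ, coneComb k (extremeRayPoints C) := by
  have hC : IsSalientCone C := ⟨hsmul, hadd, hpointed⟩
  exact (hC.subset_iUnion_coneComb_extremeRayPoints hclosed).antisymm
    (iUnion_coneComb_subset hsmul hadd hC.zero_mem (extremeRayPoints_subset C))
end
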